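/- arXiv:1910.09685 — 3 statements merged into one kernel-verified Lean document; each statement's English description precedes it below -/
import Mathlib

section
/- Let R be a commutative ring, d ≥ 1, and let X, Y ∈ Mat_d(R). Let Z = fromBlocks 0 X Y 0 be the (2d)×(2d) matrix with zero diagonal blocks and off-diagonal blocks X and Y. Then the characteristic polynomial of Z equals the characteristic polynomial of X·Y composed with the square of the polynomial variable: charpoly(Z) = (charpoly(X·Y)).comp(t²). Equivalently, det(t·1₂d − Z) = det(t²·1_d − X·Y) as polynomials in t. -/
/-!
The characteristic matrix of `fromBlocks 0 X Y 0` is `fromBlocks (t • 1) (-X) (-Y) (t • 1)`, whose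
lower blocks commute. Right multiplication by `fromBlocks (t • 1) 0 Y 1` makes it block upper
triangular with diagonal blocks `t² • 1 - X * Y` and `t • 1`, and `det (t • 1) = tᵈ` is a
non-zero-divisor in `R[t]`, so it can be cancelled.
-/

open Matrix Polynomial

namespace Matrix

variable {n R : Type*} [Fintype n] [DecidableEq n] [CommRing R]

theorem det_fromBlocks_of_commute (A B C D : Matrix n n R) (hCD : Commute C D)
    (hD : IsRightRegular D.det) :
    (fromBlocks A B C D).det = (A * D - B * C).det := by
  have hmul : fromBlocks A B C D * fromBlocks D 0 (-C) 1 = fromBlocks (A * D - B * C) B 0 D := by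
    simp [fromBlocks_multiply, hCD.eq, sub_eq_add_neg]
  apply hD
  simpa [det_fromBlocks_zero₁₂, det_fromBlocks_zero₂₁] using congrArg det hmul

theorem charpoly_comp_eq_det (M : Matrix n n R) (p : R[X]) :
    M.charpoly.comp p = (scalar n p - M.map C).det := by
  change eval₂RingHom C p M.charpoly = _
  rw [charpoly, RingHom.map_det, charmatrix, RingHom.map_sub]
  congr 1
  ext i j
  by_cases h : i = j <;> simp [h]

theorem charpoly_fromBlocks_zero_zero (X Y : Matrix n n R) :
    (fromBlocks 0 X Y 0).charpoly = (X * Y).charpoly.comp (Polynomial.X ^ 2) := by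
  rw [charpoly, charmatrix_fromBlocks, charmatrix_zero, charpoly_comp_eq_det,
    det_fromBlocks_of_commute _ _ _ _ (scalar_commute _ (Commute.all _) _).symm]
  · simp [pow_two, Matrix.map_mul]
  · simpa using (isRegular_X_pow (R := R) (Fintype.card n)).right

end Matrix

theorem stmt_6_general {R : Type*} [CommRing R] {d : ℕ}
    (X Y : Matrix (Fin d) (Fin d) R) :
    (fromBlocks 0 X Y 0 : Matrix (Fin d ⊕ Fin d) (Fin d ⊕ Fin d) R).charpoly =
      (X * Y).charpoly.comp (Polynomial.X ^ 2) :=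
  charpoly_fromBlocks_zero_zero X Y

/-- The characteristic polynomial of `Z = fromBlocks 0 X Y 0` equals the
characteristic polynomial of `X * Y` evaluated at the square of the variable:
`χ_Z(t) = χ_{XY}(t²)`. -/
theorem stmt_6 {R : Type*} [CommRing R] {d : ℕ} (hd : 1 ≤ d)
    (X Y : Matrix (Fin d) (Fin d) R) :
    (fromBlocks 0 X Y 0 : Matrix (Fin d ⊕ Fin d) (Fin d ⊕ Fin d) R).charpoly =
      (X * Y).charpoly.comp (Polynomial.X ^ 2) :=
  stmt_6_general X Y
end

section
/- Let F be a field, d ≥ 1, and let X, Y ∈ Mat_d(F). If the characteristic polynomial of the block matrix Z = fromBlocks 0 X Y 0 ∈ Mat₂d(F) is separable (i.e. has no repeated roots in an algebraic closure), then X·Y is invertible; in particular both X and Y are invertible. Hence a regular semisimple element of the (−1)-eigenspace, identified with a pair (X,Y), necessarily lies in the locus where X and Y are linear isomorphisms. -/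
open Matrix Polynomial

lemma charpoly_fromBlocks_zero_diag {F : Type*} [Field F] {d : ℕ}
    (X Y : Matrix (Fin d) (Fin d) F) :
    (fromBlocks 0 X Y 0 :
        Matrix (Fin d ⊕ Fin d) (Fin d ⊕ Fin d) F).charpoly
      = ((X * Y).charpoly).comp (Polynomial.X ^ 2) := by
  classical
  set T : Matrix (Fin d) (Fin d) F[X] := Matrix.scalar (Fin d) Polynomial.X with hT
  have hM : charmatrix (fromBlocks 0 X Y 0 :
      Matrix (Fin d ⊕ Fin d) (Fin d ⊕ Fin d) F)
      = fromBlocks T (-(X.map C)) (-(Y.map C)) T := by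
    rw [charmatrix_fromBlocks]
    congr 1 <;> simp [charmatrix, hT]
  set N : Matrix (Fin d ⊕ Fin d) (Fin d ⊕ Fin d) F[X] :=
    fromBlocks T 0 (Y.map C) 1 with hN
  have hcomm : T * (Y.map C) = (Y.map C) * T :=
    (Matrix.scalar_commute Polynomial.X (fun r => Commute.all _ r) (Y.map C)).eq
  have hmap : (X.map C) * (Y.map C) = (X * Y).map C := by
    ext i j
    simp [Matrix.mul_apply, Matrix.map_apply]
  have hMN : charmatrix (fromBlocks 0 X Y 0 :
      Matrix (Fin d ⊕ Fin d) (Fin d ⊕ Fin d) F) * N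
      = fromBlocks (T * T - (X * Y).map C) (-(X.map C)) 0 T := by
    rw [hM, hN, fromBlocks_multiply]
    have h11 : T * T + -(X.map C) * (Y.map C) = T * T - (X * Y).map C := by
      rw [Matrix.neg_mul, hmap, sub_eq_add_neg]
    have h12 : T * 0 + -(X.map C) * 1 = -(X.map C) := by
      rw [Matrix.mul_zero, Matrix.mul_one, zero_add]
    have h21 : -(Y.map C) * T + T * (Y.map C) = 0 := by
      rw [hcomm, Matrix.neg_mul, neg_add_cancel]
    have h22 : -(Y.map C) * 0 + T * 1 = T := by
      rw [Matrix.mul_zero, Matrix.mul_one, zero_add]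
    rw [h11, h12, h21, h22]
  have hdetN : N.det = Polynomial.X ^ d := by
    rw [hN, det_fromBlocks_zero₁₂, det_one, mul_one, hT, Matrix.scalar_apply,
      det_diagonal, Finset.prod_const, Finset.card_univ, Fintype.card_fin]
  have hTT : T * T = Matrix.scalar (Fin d) (Polynomial.X ^ 2) := by
    rw [hT, ← RingHom.map_mul, sq]
  have hcomp : ((X * Y).charpoly).comp (Polynomial.X ^ 2)
      = (Matrix.scalar (Fin d) (Polynomial.X ^ 2) - (X * Y).map C).det := by
    set f : F[X] →+* F[X] := Polynomial.eval₂RingHom Polynomial.C (Polynomial.X ^ 2) with hf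
    have h1 : ((X * Y).charpoly).comp (Polynomial.X ^ 2) = f ((X * Y).charpoly) := rfl
    have h2 : (charmatrix (X * Y)).map f
        = Matrix.scalar (Fin d) (Polynomial.X ^ 2) - (X * Y).map C := by
      ext i j
      by_cases h : i = j
      · subst h
        simp [-Matrix.map_mul, charmatrix_apply_eq, hf, Matrix.scalar_apply, Matrix.map_apply,
          Matrix.sub_apply, Matrix.diagonal_apply_eq]
      · simp [-Matrix.map_mul, charmatrix_apply_ne _ _ _ h, hf, Matrix.scalar_apply, Matrix.map_apply,
          Matrix.sub_apply, Matrix.diagonal_apply_ne _ h, h]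
    rw [h1, Matrix.charpoly, RingHom.map_det, RingHom.mapMatrix_apply, h2]
  have hX : (Polynomial.X ^ d : F[X]) ≠ 0 := pow_ne_zero _ Polynomial.X_ne_zero
  apply mul_right_cancel₀ hX
  calc (fromBlocks 0 X Y 0 :
      Matrix (Fin d ⊕ Fin d) (Fin d ⊕ Fin d) F).charpoly * Polynomial.X ^ d
      = (charmatrix (fromBlocks 0 X Y 0 :
          Matrix (Fin d ⊕ Fin d) (Fin d ⊕ Fin d) F)).det * N.det := by
        rw [hdetN]; rfl
    _ = (charmatrix (fromBlocks 0 X Y 0 :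
          Matrix (Fin d ⊕ Fin d) (Fin d ⊕ Fin d) F) * N).det := (det_mul _ _).symm
    _ = (T * T - (X * Y).map C).det * T.det := by
        rw [hMN, det_fromBlocks_zero₂₁]
    _ = ((X * Y).charpoly).comp (Polynomial.X ^ 2) * Polynomial.X ^ d := by
        rw [hTT, ← hcomp, hT, Matrix.scalar_apply, det_diagonal, Finset.prod_const,
          Finset.card_univ, Fintype.card_fin]

/-- If the characteristic polynomial of `Z = fromBlocks 0 X Y 0` is separable,
then `X * Y` is invertible, and in particular so are `X` and `Y`: a regular
semisimple element of the `(-1)`-eigenspace lies in the non-singular locus. -/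
theorem stmt_7 {F : Type*} [Field F] {d : ℕ} (hd : 1 ≤ d)
    (X Y : Matrix (Fin d) (Fin d) F)
    (hsep : (fromBlocks 0 X Y 0 :
        Matrix (Fin d ⊕ Fin d) (Fin d ⊕ Fin d) F).charpoly.Separable) :
    IsUnit (X * Y) ∧ IsUnit X ∧ IsUnit Y := by
  have hsq := hsep.squarefree
  have hkey := charpoly_fromBlocks_zero_diag X Y
  have hXY : IsUnit (X * Y) := by
    by_contra h
    have hdet : (X * Y).det = 0 := by
      by_contra hdet
      exact h ((Matrix.isUnit_iff_isUnit_det _).mpr (isUnit_iff_ne_zero.mpr hdet))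
    have hc0 : ((X * Y).charpoly).coeff 0 = 0 := by
      have h2 := Matrix.det_eq_sign_charpoly_coeff (X * Y)
      rw [hdet] at h2
      have h1 : ((-1 : F) ^ Fintype.card (Fin d)) ≠ 0 := by
        simp
      exact by
        rcases mul_eq_zero.mp h2.symm with h | h
        · exact absurd h h1
        · exact h
    obtain ⟨r, hr⟩ := Polynomial.X_dvd_iff.mpr hc0
    have hdvd : Polynomial.X * Polynomial.X ∣ (fromBlocks 0 X Y 0 :
        Matrix (Fin d ⊕ Fin d) (Fin d ⊕ Fin d) F).charpoly := by
      rw [hkey, hr, mul_comp, X_comp]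
      exact ⟨r.comp (Polynomial.X ^ 2), by ring⟩
    exact Polynomial.not_isUnit_X (hsq _ hdvd)
  refine ⟨hXY, ?_, ?_⟩
  · have h3 := (Matrix.isUnit_iff_isUnit_det _).mp hXY
    rw [det_mul] at h3
    exact (Matrix.isUnit_iff_isUnit_det _).mpr (isUnit_of_mul_isUnit_left h3)
  · have h3 := (Matrix.isUnit_iff_isUnit_det _).mp hXY
    rw [det_mul] at h3
    exact (Matrix.isUnit_iff_isUnit_det _).mpr (isUnit_of_mul_isUnit_right h3)
end

section
/- Let E be a field with a ring involution, let J₁, J₂ be invertible Hermitian d×d matrices over E, let X ∈ GL_d(E), write X^⋆ = J₂⁻¹·Xᴴ·J₁ and δ = X·X^⋆. Then: (i) for h₁ ∈ U(J₁), the matrix X⁻¹·h₁·X lies in U(J₂) if and only if h₁·δ = δ·h₁; (ii) the map h₁ ↦ (h₁, X⁻¹·h₁·X) is a group isomorphism from the centralizer T_δ = {h₁ ∈ U(J₁) : h₁·δ = δ·h₁} onto the stabilizer H_X = {(h₁,h₂) ∈ U(J₁) × U(J₂) : h₁·X·h₂⁻¹ = X}, with inverse (h₁,h₂) ↦ h₁.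 -/
open Matrix

private lemma unit_of_unitary {E : Type*} [Field E] [StarRing E] {d : ℕ}
    {J h : Matrix (Fin d) (Fin d) E}
    (hJ : IsUnit J.det) (e : hᴴ * J * h = J) : IsUnit h.det := by
  have hd := congrArg Matrix.det e
  simp only [Matrix.det_mul, Matrix.det_conjTranspose] at hd
  have hJ0 : J.det ≠ 0 := hJ.ne_zero
  refine isUnit_iff_ne_zero.2 fun h0 => hJ0 ?_
  rw [h0, mul_zero] at hd
  exact hd.symm

private lemma cancels {E : Type*} [Field E] {d : ℕ}
    {A : Matrix (Fin d) (Fin d) E} (hA : IsUnit A.det) :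
    (∀ B : Matrix (Fin d) (Fin d) E, A * (A⁻¹ * B) = B) ∧
    (∀ B : Matrix (Fin d) (Fin d) E, A⁻¹ * (A * B) = B) ∧
    A * A⁻¹ = 1 ∧ A⁻¹ * A = 1 :=
  ⟨fun B => Matrix.mul_nonsing_inv_cancel_left _ B hA,
   fun B => Matrix.nonsing_inv_mul_cancel_left _ B hA,
   Matrix.mul_nonsing_inv _ hA, Matrix.nonsing_inv_mul _ hA⟩

/-- For invertible `X` with `δ = X X^⋆`: an element `h₁ ∈ U(J₁)` is carried into
`U(J₂)` by `h₁ ↦ X⁻¹ h₁ X` exactly when it centralizes `δ`, and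
`h₁ ↦ (h₁, X⁻¹ h₁ X)` identifies the centralizer `T_δ ⊆ U(J₁)` with the
stabilizer `H_X ⊆ U(J₁) × U(J₂)` of `X`, with inverse the first projection. -/
theorem stmt_9 {E : Type*} [Field E] [StarRing E] {d : ℕ}
    (J₁ J₂ : Matrix (Fin d) (Fin d) E)
    (hJ₁ : IsUnit J₁) (hJ₂ : IsUnit J₂)
    (hJ₁h : J₁ᴴ = J₁) (hJ₂h : J₂ᴴ = J₂)
    (X : Matrix (Fin d) (Fin d) E) (hX : IsUnit X) :
    -- (i) membership criterion
    (∀ h₁ : Matrix (Fin d) (Fin d) E, h₁ᴴ * J₁ * h₁ = J₁ →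
      ((X⁻¹ * h₁ * X)ᴴ * J₂ * (X⁻¹ * h₁ * X) = J₂ ↔
        h₁ * (X * (J₂⁻¹ * Xᴴ * J₁)) = (X * (J₂⁻¹ * Xᴴ * J₁)) * h₁)) ∧
    -- (ii) the isomorphism of the centralizer with the stabilizer
    (∀ h₁ h₂ : Matrix (Fin d) (Fin d) E,
      h₁ᴴ * J₁ * h₁ = J₁ → h₂ᴴ * J₂ * h₂ = J₂ →
      (h₁ * X * h₂⁻¹ = X ↔
        (h₁ * (X * (J₂⁻¹ * Xᴴ * J₁)) = (X * (J₂⁻¹ * Xᴴ * J₁)) * h₁ ∧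
          h₂ = X⁻¹ * h₁ * X))) := by
  have hXd : IsUnit X.det := (Matrix.isUnit_iff_isUnit_det X).1 hX
  have hJ₁d : IsUnit J₁.det := (Matrix.isUnit_iff_isUnit_det J₁).1 hJ₁
  have hJ₂d : IsUnit J₂.det := (Matrix.isUnit_iff_isUnit_det J₂).1 hJ₂
  have hYd : IsUnit Xᴴ.det := by
    rw [Matrix.det_conjTranspose]; exact (isUnit_star).2 hXd
  obtain ⟨cX, dX, eX, fX⟩ := cancels hXd
  obtain ⟨cY, dY, eY, fY⟩ := cancels hYd
  obtain ⟨c1, d1, e1', f1'⟩ := cancels hJ₁d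
  obtain ⟨c2, d2, e2', f2'⟩ := cancels hJ₂d
  have part1 : ∀ h₁ : Matrix (Fin d) (Fin d) E, h₁ᴴ * J₁ * h₁ = J₁ →
      ((X⁻¹ * h₁ * X)ᴴ * J₂ * (X⁻¹ * h₁ * X) = J₂ ↔
        h₁ * (X * (J₂⁻¹ * Xᴴ * J₁)) = (X * (J₂⁻¹ * Xᴴ * J₁)) * h₁) := by
    intro h₁ e1
    have hh : IsUnit h₁.det := unit_of_unitary hJ₁d e1
    obtain ⟨ch, dh, eh, fh⟩ := cancels hh
    have hstar : h₁ᴴ = J₁ * h₁⁻¹ * J₁⁻¹ := by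
      have := congrArg (fun M => M * (h₁⁻¹ * J₁⁻¹)) e1
      simpa [Matrix.mul_assoc, cX, dX, eX, fX, cY, dY, eY, fY, c1, d1, e1', f1',
        c2, d2, e2', f2', ch, dh, eh, fh] using this
    constructor
    · intro U
      simp only [Matrix.conjTranspose_mul, Matrix.conjTranspose_nonsing_inv, hstar,
        Matrix.mul_assoc] at U
      have V := congrArg (fun M => J₁⁻¹ * (Xᴴ⁻¹ * M * X⁻¹)) U
      simp only [Matrix.mul_assoc] at V
      have W := congrArg
        (fun M => X * (J₂⁻¹ * (Xᴴ * (J₁ * (h₁ * (M * (X * (J₂⁻¹ * (Xᴴ * J₁))))))))) V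
      simpa [Matrix.mul_assoc, cX, dX, eX, fX, cY, dY, eY, fY, c1, d1, e1', f1',
        c2, d2, e2', f2', ch, dh, eh, fh] using W
    · intro comm
      have D : J₁⁻¹ * (Xᴴ⁻¹ * (J₂ * (X⁻¹ * h₁))) =
          h₁ * (J₁⁻¹ * (Xᴴ⁻¹ * (J₂ * X⁻¹))) := by
        have := congrArg
          (fun M => J₁⁻¹ * (Xᴴ⁻¹ * (J₂ * (X⁻¹ * M))) * (J₁⁻¹ * (Xᴴ⁻¹ * (J₂ * X⁻¹)))) comm
        simpa [Matrix.mul_assoc, cX, dX, eX, fX, cY, dY, eY, fY, c1, d1, e1', f1',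
          c2, d2, e2', f2', ch, dh, eh, fh] using this
      have := congrArg (fun M => Xᴴ * (J₁ * (h₁⁻¹ * (M * X)))) D
      simpa [Matrix.conjTranspose_mul, Matrix.conjTranspose_nonsing_inv, hstar,
        Matrix.mul_assoc, cX, dX, eX, fX, cY, dY, eY, fY, c1, d1, e1', f1',
        c2, d2, e2', f2', ch, dh, eh, fh] using this
  refine ⟨part1, ?_⟩
  intro h₁ h₂ e1 e2
  have hh1 : IsUnit h₁.det := unit_of_unitary hJ₁d e1
  have hh2 : IsUnit h₂.det := unit_of_unitary hJ₂d e2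
  obtain ⟨ch1, dh1, eh1, fh1⟩ := cancels hh1
  obtain ⟨ch2, dh2, eh2, fh2⟩ := cancels hh2
  constructor
  · intro st
    have hh₂eq : h₂ = X⁻¹ * h₁ * X := by
      have := congrArg (fun M => X⁻¹ * (M * h₂)) st
      simpa [Matrix.mul_assoc, cX, dX, eX, fX, ch2, dh2, eh2, fh2] using this.symm
    refine ⟨(part1 h₁ e1).1 ?_, hh₂eq⟩
    rw [← hh₂eq]; exact e2
  · rintro ⟨comm, rfl⟩
    have hinv : (X⁻¹ * h₁ * X)⁻¹ = X⁻¹ * h₁⁻¹ * X := by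
      rw [Matrix.mul_inv_rev, Matrix.mul_inv_rev, Matrix.nonsing_inv_nonsing_inv X hXd,
        Matrix.mul_assoc]
    rw [hinv]
    simp [Matrix.mul_assoc, cX, dX, eX, fX, ch1, dh1, eh1, fh1]
end
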